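/- arXiv:2207.14692 — 2 statements merged into one kernel-verified Lean document; each statement's English description precedes it below -/
import Mathlib

section
/- Consider the FGM construction with strictly positive marginals as in Theorem 3.2, with I : Ω → {0,1}^d having symmetric Bernoulli marginals, and define for every subset J ⊆ {1,...,d} with |J| ≥ 2 the parameter θ_J = (−2)^{|J|} E[∏_{j∈J}(I_j − 1/2)]. Fix m ∈ ℕ≥1 with all m-th moments finite, write E[X_k^j] for the j-th moment of F_k and μ^{(j)}_{k,[2]} = E[(X^[2]_k)^j]. Then E[S^m] = Σ_{(j_1,...,j_d)∈ℕ^d : j_1+···+j_d = m} (m!/(j_1!···j_d!)) · (∏_{k=1}^d E[X_k^{j_k}]) · [1 + Σ_{J⊆{1,...,d}, |J|≥2} θ_J ∏_{n∈J}(1 − μ^{(j_n)}_{n,[2]}/E[X_n^{j_n}])]. -/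
/-!
Since `I` is `{0,1}^d`-valued, `X_k = X^[I_k]_k`. Splitting over the finitely many values `v` of
`I` and using independence of `I` and the `X^[c]_k`, one gets `E[∏ X_k^{j_k}] = E[∏_k M(I_k, k)]`
with `M(c, k) = E[(X^[c]_k)^{j_k}]`. Writing
`M(I_k, k) = E[X_k^{j_k}] + (I_k - 1/2) (M(1,k) - M(0,k))` and expanding the product over
subsets `J`, the term `J = ∅` gives `∏ E[X_k^{j_k}]`, singletons vanish because the marginals are
symmetric, and `M(1,k) - M(0,k) = -2 (E[X_k^{j_k}] - M(1,k))` turns the other terms into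
`θ_J ∏_J (1 - M(1,n) / E[X_n^{j_n}])`. The multinomial theorem then assembles the moments of `S`.
-/

open MeasureTheory ProbabilityTheory

/-- Codomains of the `2d+1` random elements in the FGM construction. -/
def fgmType (d : ℕ) : Option (Fin d × Fin 2) → Type
  | none => Fin d → Fin 2
  | some _ => ℝ

instance fgmTypeMeasurableSpace (d : ℕ) (o : Option (Fin d × Fin 2)) :
    MeasurableSpace (fgmType d o) := by
  cases o with
  | none => exact (inferInstance : MeasurableSpace (Fin d → Fin 2))
  | some p => exact (inferInstance : MeasurableSpace ℝ)

/-- The family consisting of the Bernoulli random vector `I` together with the `2d`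
order-statistic components `X j k` (`j = 0`: minimum, `j = 1`: maximum). -/
def fgmFamily {Ω : Type*} (d : ℕ) (I : Ω → Fin d → Fin 2)
    (X : Fin 2 → Fin d → Ω → ℝ) : (o : Option (Fin d × Fin 2)) → Ω → fgmType d o
  | none => I
  | some p => X p.2 p.1

lemma comp_eq_sum_ite_mul {α β R : Type*} [Fintype α] [DecidableEq α] [Semiring R]
    (f : β → α) (F : α → β → R) :
    (fun b ↦ F (f b) b) = fun b ↦ ∑ v, (if f b = v then 1 else 0) * F v b := by
  simp

lemma Nat.cast_multinomial {α K : Type*} [Field K] [CharZero K] (s : Finset α) (f : α → ℕ) :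
    (Nat.multinomial s f : K)
      = ((∑ i ∈ s, f i).factorial : K) / ∏ i ∈ s, ((f i).factorial : K) := by
  rw [eq_div_iff (Finset.prod_ne_zero_iff.2 fun i _ ↦ Nat.cast_ne_zero.2 (Nat.factorial_ne_zero _)),
    mul_comm, ← Nat.cast_prod, ← Nat.cast_mul, Nat.multinomial_spec]

lemma Finset.Nat.le_of_mem_antidiagonalTuple {k n : ℕ} {j : Fin k → ℕ}
    (hj : j ∈ Finset.Nat.antidiagonalTuple k n) (i : Fin k) : j i ≤ n :=
  (Finset.single_le_sum (fun _ _ ↦ Nat.zero_le _) (Finset.mem_univ i)).trans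
    (Finset.Nat.mem_antidiagonalTuple.1 hj).le

lemma sum_mul_prod_mul_prod_compl_eq {ι K : Type*} [Fintype ι] [DecidableEq ι] [Field K]
    (c : Finset ι → K) (D E : ι → K) (hc₀ : c ∅ = 1) (hc₁ : ∀ k, c {k} = 0)
    (hE : ∀ n, E n ≠ 0) :
    ∑ J, c J * ((∏ n ∈ J, D n) * ∏ n ∈ Jᶜ, E n)
      = (∏ n, E n)
        * (1 + ∑ J ∈ Finset.univ.filter (fun J ↦ 2 ≤ J.card), c J * ∏ n ∈ J, D n / E n) := by
  have hterm : ∀ J : Finset ι, (∏ n ∈ J, D n) * ∏ n ∈ Jᶜ, E n = (∏ n, E n) * ∏ n ∈ J, D n / E n :=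
    fun J ↦ by
      have hJ : ∏ n ∈ J, E n ≠ 0 := Finset.prod_ne_zero_iff.2 fun n _ ↦ hE n
      rw [← Finset.prod_mul_prod_compl J E, Finset.prod_div_distrib]
      field_simp
  have hsmall : ∑ J ∈ Finset.univ.filter (fun J : Finset ι ↦ ¬ 2 ≤ J.card), c J * ∏ n ∈ J, D n / E n
      = 1 := by
    rw [Finset.sum_eq_single_of_mem ∅ (by simp) fun J hJ hJ₀ ↦ ?_]
    · simp [hc₀]
    obtain ⟨k, rfl⟩ : ∃ k, J = {k} := Finset.card_eq_one.1 <| by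
      have := (Finset.mem_filter.1 hJ).2
      have := Finset.nonempty_iff_ne_empty.2 hJ₀ |>.card_pos
      omega
    simp [hc₁]
  simp_rw [hterm, mul_left_comm (c _), ← Finset.mul_sum]
  rw [← Finset.sum_filter_add_sum_filter_not Finset.univ (fun J : Finset ι ↦ 2 ≤ J.card), hsmall,
    add_comm]

namespace ProbabilityTheory

lemma iIndepFun.integrable_fun_prod_comp {Ω ι : Type*} [MeasurableSpace Ω] {μ : Measure Ω}
    [Fintype ι] {𝓧 : ι → Type*} {m𝓧 : ∀ i, MeasurableSpace (𝓧 i)} {X : (i : ι) → Ω → 𝓧 i}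
    {f : (i : ι) → 𝓧 i → ℝ} (hX : iIndepFun X μ) (mX : ∀ i, Measurable (X i))
    (hf : ∀ i, AEStronglyMeasurable (f i) (μ.map (X i)))
    (hfX : ∀ i, Integrable (fun ω ↦ f i (X i ω)) μ) :
    Integrable (fun ω ↦ ∏ i, f i (X i ω)) μ := by
  have := hX.isProbabilityMeasure
  have : ∀ i, IsProbabilityMeasure (μ.map (X i)) :=
    fun i ↦ Measure.isProbabilityMeasure_map (mX i).aemeasurable
  have hpi : Integrable (fun x : (i : ι) → 𝓧 i ↦ ∏ i, f i (x i)) (μ.map fun ω i ↦ X i ω) := by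
    rw [hX.map_fun_eq_pi_map fun i ↦ (mX i).aemeasurable]
    exact .fintype_prod_dep fun i ↦ (integrable_map_measure (hf i) (mX i).aemeasurable).2 (hfX i)
  exact hpi.comp_measurable (measurable_pi_lambda _ mX)

end ProbabilityTheory

lemma integrable_comp_of_finite {Ω α : Type*} [MeasurableSpace Ω] {μ : Measure Ω}
    [IsFiniteMeasure μ] [Finite α] [MeasurableSpace α] [MeasurableSingletonClass α] {f : Ω → α}
    (hf : Measurable f) (g : α → ℝ) : Integrable (fun ω ↦ g (f ω)) μ :=
  Integrable.of_finite.comp_measurable hf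

lemma Fin.one_sub_cast_mul_add_cast_mul {R : Type*} [Ring R] (x : Fin 2 → R) (i : Fin 2) :
    (1 - ((i : ℕ) : R)) * x 0 + ((i : ℕ) : R) * x 1 = x i := by
  fin_cases i <;> simp

lemma integral_natCast_val_fin_two {Ω : Type*} [MeasurableSpace Ω] {μ : Measure Ω} {f : Ω → Fin 2}
    (hf : Measurable f) : ∫ ω, ((f ω : ℕ) : ℝ) ∂μ = μ.real {ω | f ω = 1} := by
  have hs : MeasurableSet {ω | f ω = 1} := hf (measurableSet_singleton 1)
  rw [← integral_indicator_one hs]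
  congr with ω
  rcases Fin.exists_fin_two.mp ⟨f ω, rfl⟩ with h | h <;> simp [Set.indicator, h]

lemma integrable_pow_of_le {Ω : Type*} [MeasurableSpace Ω] {μ : Measure Ω} [IsFiniteMeasure μ]
    {f : Ω → ℝ} (hf : AEStronglyMeasurable f μ) {n m : ℕ} (hnm : n ≤ m)
    (hint : Integrable (fun ω ↦ f ω ^ m) μ) : Integrable (fun ω ↦ f ω ^ n) μ := by
  have hnorm := integrable_norm_pow_of_le hf hnm (by simpa only [norm_pow] using hint.norm)
  exact (integrable_norm_iff (hf.pow n)).1 (by simpa only [Pi.pow_apply, norm_pow] using hnorm)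

lemma integral_pos_of_forall_pos {Ω : Type*} [MeasurableSpace Ω] {μ : Measure Ω} [NeZero μ]
    {f : Ω → ℝ} (hf : ∀ ω, 0 < f ω) (hfi : Integrable f μ) : 0 < ∫ ω, f ω ∂μ := by
  rw [integral_pos_iff_support_of_nonneg (fun ω ↦ (hf ω).le) hfi,
    Function.support_eq_univ fun ω ↦ (hf ω).ne']
  exact Measure.measure_univ_pos.2 (NeZero.ne μ)

lemma integral_prod_fin_two_eq_sum {Ω ι : Type*} [MeasurableSpace Ω] {μ : Measure Ω}
    [IsFiniteMeasure μ] [Fintype ι] [DecidableEq ι] {I : Ω → ι → Fin 2} (hI : Measurable I)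
    (M : Fin 2 → ι → ℝ) :
    ∫ ω, ∏ k, M (I ω k) k ∂μ
      = ∑ J : Finset ι, (∫ ω, ∏ n ∈ J, (((I ω n : ℕ) : ℝ) - 1 / 2) ∂μ)
          * ((∏ n ∈ J, (M 1 n - M 0 n)) * ∏ n ∈ Jᶜ, (M 0 n + M 1 n) / 2) := by
  have hcentre : ∀ ω, ∏ k, M (I ω k) k = ∑ J : Finset ι, (∏ n ∈ J, (((I ω n : ℕ) : ℝ) - 1 / 2))
      * ((∏ n ∈ J, (M 1 n - M 0 n)) * ∏ n ∈ Jᶜ, (M 0 n + M 1 n) / 2) := fun ω ↦ by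
    have h : ∀ k, M (I ω k) k
        = (((I ω k : ℕ) : ℝ) - 1 / 2) * (M 1 k - M 0 k) + (M 0 k + M 1 k) / 2 := fun k ↦ by
      rw [← Fin.one_sub_cast_mul_add_cast_mul (fun c ↦ M c k) (I ω k)]
      ring
    simp_rw [h, Fintype.prod_add, Finset.prod_mul_distrib, mul_assoc]
  simp_rw [hcentre]
  rw [integral_finsetSum _ fun J _ ↦ (integrable_comp_of_finite hI
    fun u ↦ ∏ n ∈ J, (((u n : ℕ) : ℝ) - 1 / 2)).mul_const _]
  simp_rw [integral_mul_const]

section FGM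

variable {Ω : Type*} [MeasurableSpace Ω] {P : Measure Ω} {d : ℕ}
  {I : Ω → Fin d → Fin 2} {X : Fin 2 → Fin d → Ω → ℝ}

def fgmSelect (c : Fin d → Fin 2) : Option (Fin d) → Option (Fin d × Fin 2) :=
  Option.map fun k ↦ (k, c k)

lemma fgmSelect_injective (c : Fin d → Fin 2) : Function.Injective (fgmSelect c) :=
  Option.map_injective fun _ _ h ↦ congrArg Prod.fst h

def fgmFactor (c : Fin d → Fin 2) (g : (Fin d → Fin 2) → ℝ) (ψ : Fin d → ℝ → ℝ) :
    (o : Option (Fin d)) → fgmType d (fgmSelect c o) → ℝ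
  | none => g
  | some k => ψ k

lemma measurable_fgmFamily_select (hI : Measurable I) (hX : ∀ j k, Measurable (X j k))
    (c : Fin d → Fin 2) (o : Option (Fin d)) :
    Measurable (fgmFamily d I X (fgmSelect c o)) := by
  cases o with
  | none => exact hI
  | some k => exact hX (c k) k

lemma measurable_fgmFactor (c : Fin d → Fin 2) (g : (Fin d → Fin 2) → ℝ) {ψ : Fin d → ℝ → ℝ}
    (hψ : ∀ k, Measurable (ψ k)) (o : Option (Fin d)) : Measurable (fgmFactor c g ψ o) := by
  cases o with
  | none => exact measurable_of_finite g
  | some k => exact hψ k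

lemma integral_mul_prod_fgmFamily (hI : Measurable I) (hX : ∀ j k, Measurable (X j k))
    (hIndep : iIndepFun (fgmFamily d I X) P) (c : Fin d → Fin 2) (g : (Fin d → Fin 2) → ℝ)
    {ψ : Fin d → ℝ → ℝ} (hψ : ∀ k, Measurable (ψ k)) :
    ∫ ω, g (I ω) * ∏ k, ψ k (X (c k) k ω) ∂P
      = (∫ ω, g (I ω) ∂P) * ∏ k, ∫ ω, ψ k (X (c k) k ω) ∂P := by
  have h := (hIndep.precomp (fgmSelect_injective c)).integral_fun_prod_comp (f := fgmFactor c g ψ)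
    (fun o ↦ (measurable_fgmFamily_select hI hX c o).aemeasurable)
    fun o ↦ (measurable_fgmFactor c g hψ o).aestronglyMeasurable
  simp only [Fintype.prod_option] at h
  exact h

lemma integrable_mul_prod_fgmFamily (hI : Measurable I) (hX : ∀ j k, Measurable (X j k))
    (hIndep : iIndepFun (fgmFamily d I X) P) (c : Fin d → Fin 2) (g : (Fin d → Fin 2) → ℝ)
    {ψ : Fin d → ℝ → ℝ} (hψ : ∀ k, Measurable (ψ k))
    (hψX : ∀ k, Integrable (fun ω ↦ ψ k (X (c k) k ω)) P) :
    Integrable (fun ω ↦ g (I ω) * ∏ k, ψ k (X (c k) k ω)) P := by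
  have := hIndep.isProbabilityMeasure
  have h := (hIndep.precomp (fgmSelect_injective c)).integrable_fun_prod_comp (f := fgmFactor c g ψ)
    (measurable_fgmFamily_select hI hX c)
    (fun o ↦ (measurable_fgmFactor c g hψ o).aestronglyMeasurable) fun o ↦ by
      cases o with
      | none => exact integrable_comp_of_finite hI g
      | some k => exact hψX k
  simp only [Fintype.prod_option] at h
  exact h

lemma integrable_prod_comp_select (hI : Measurable I) (hX : ∀ j k, Measurable (X j k))
    (hIndep : iIndepFun (fgmFamily d I X) P) {ψ : Fin d → ℝ → ℝ} (hψ : ∀ k, Measurable (ψ k))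
    (hψX : ∀ c k, Integrable (fun ω ↦ ψ k (X c k ω)) P) :
    Integrable (fun ω ↦ ∏ k, ψ k (X (I ω k) k ω)) P := by
  classical
  rw [comp_eq_sum_ite_mul I fun v ω ↦ ∏ k, ψ k (X (v k) k ω)]
  exact integrable_finsetSum _ fun v _ ↦
    integrable_mul_prod_fgmFamily hI hX hIndep v (fun u ↦ if u = v then 1 else 0) hψ
      fun k ↦ hψX (v k) k

lemma integral_prod_comp_select (hI : Measurable I) (hX : ∀ j k, Measurable (X j k))
    (hIndep : iIndepFun (fgmFamily d I X) P) {ψ : Fin d → ℝ → ℝ} (hψ : ∀ k, Measurable (ψ k))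
    (hψX : ∀ c k, Integrable (fun ω ↦ ψ k (X c k ω)) P) :
    ∫ ω, ∏ k, ψ k (X (I ω k) k ω) ∂P = ∫ ω, ∏ k, ∫ ω', ψ k (X (I ω k) k ω') ∂P ∂P := by
  classical
  have := hIndep.isProbabilityMeasure
  rw [comp_eq_sum_ite_mul I fun v ω ↦ ∏ k, ψ k (X (v k) k ω),
    comp_eq_sum_ite_mul I fun v _ ↦ ∏ k, ∫ ω', ψ k (X (v k) k ω') ∂P]
  rw [integral_finsetSum _ fun v _ ↦
      integrable_mul_prod_fgmFamily hI hX hIndep v (fun u ↦ if u = v then 1 else 0) hψ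
        fun k ↦ hψX (v k) k,
    integral_finsetSum _ fun v _ ↦
      (integrable_comp_of_finite hI fun u ↦ if u = v then 1 else 0).mul_const _]
  refine Finset.sum_congr rfl fun v _ ↦ ?_
  rw [integral_mul_prod_fgmFamily hI hX hIndep v (fun u ↦ if u = v then 1 else 0) hψ,
    integral_mul_const]

lemma integral_prod_pow_select (hI : Measurable I) (hX : ∀ j k, Measurable (X j k))
    (hIndep : iIndepFun (fgmFamily d I X) P) (hsym : ∀ k, ∫ ω, ((I ω k : ℕ) : ℝ) ∂P = 1 / 2)
    (j : Fin d → ℕ) (hint : ∀ c k, Integrable (fun ω ↦ X c k ω ^ j k) P)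
    (E : Fin d → ℝ) (hE : ∀ k, E k = ((∫ ω, X 0 k ω ^ j k ∂P) + ∫ ω, X 1 k ω ^ j k ∂P) / 2)
    (hE₀ : ∀ k, E k ≠ 0) :
    ∫ ω, ∏ k, X (I ω k) k ω ^ j k ∂P
      = (∏ k, E k) * (1 + ∑ J ∈ Finset.univ.filter (fun J : Finset (Fin d) ↦ 2 ≤ J.card),
          (-2 : ℝ) ^ J.card * (∫ ω, ∏ n ∈ J, (((I ω n : ℕ) : ℝ) - 1 / 2) ∂P)
            * ∏ n ∈ J, (1 - (∫ ω, X 1 n ω ^ j n ∂P) / E n)) := by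
  classical
  have := hIndep.isProbabilityMeasure
  rw [integral_prod_comp_select hI hX hIndep (ψ := fun k x ↦ x ^ j k) (fun k ↦ by fun_prop) hint,
    integral_prod_fin_two_eq_sum hI fun c k ↦ ∫ ω, X c k ω ^ j k ∂P]
  simp_rw [← hE]
  have hcentred : ∀ k, ∫ ω, ∏ n ∈ {k}, (((I ω n : ℕ) : ℝ) - 1 / 2) ∂P = 0 := fun k ↦ by
    simp only [Finset.prod_singleton]
    rw [integral_sub (integrable_comp_of_finite hI fun u ↦ ((u k : ℕ) : ℝ)) (integrable_const _),
      hsym]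
    simp
  rw [sum_mul_prod_mul_prod_compl_eq _ _ _ (by simp) hcentred hE₀]
  congr 2
  refine Finset.sum_congr rfl fun J _ ↦ ?_
  rw [mul_comm ((-2 : ℝ) ^ J.card), mul_assoc, ← Finset.prod_const, ← Finset.prod_mul_distrib]
  congr 2 with n
  field_simp [hE₀ n]
  rw [hE n]
  ring

end FGM

theorem fgm_aggregate_moments_natural_general {Ω : Type*} [MeasurableSpace Ω]
    (P : Measure Ω) [IsProbabilityMeasure P] (d : ℕ)
    (I : Ω → Fin d → Fin 2) (X : Fin 2 → Fin d → Ω → ℝ)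
    (hI : Measurable I) (hX : ∀ j k, Measurable (X j k))
    (hpos : ∀ j k ω, 0 < X j k ω)
    (hIndep : iIndepFun (fgmFamily d I X) P)
    (hmarg : ∀ k : Fin d, P {ω | I ω k = 1} = 1 / 2)
    (θ : Finset (Fin d) → ℝ)
    (hθ : ∀ J : Finset (Fin d), 2 ≤ J.card →
      θ J = (-2 : ℝ) ^ J.card * ∫ ω, ∏ j ∈ J, (((I ω j : ℕ) : ℝ) - 1 / 2) ∂P)
    (m : ℕ)
    (hint : ∀ j k, Integrable (fun ω => X j k ω ^ m) P)
    (EX : Fin d → ℕ → ℝ)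
    (hEX : ∀ k j, EX k j
      = ((∫ ω, X 0 k ω ^ j ∂P) + ∫ ω, X 1 k ω ^ j ∂P) / 2) :
    ∫ ω, (∑ k, ((1 - ((I ω k : ℕ) : ℝ)) * X 0 k ω + ((I ω k : ℕ) : ℝ) * X 1 k ω)) ^ m ∂P
      = ∑ j ∈ Finset.Nat.antidiagonalTuple d m,
          ((m.factorial : ℝ) / ∏ k, ((j k).factorial : ℝ))
            * (∏ k, EX k (j k))
            * (1 + ∑ J ∈ Finset.univ.filter (fun J : Finset (Fin d) => 2 ≤ J.card),
                θ J * ∏ n ∈ J, (1 - (∫ ω, X 1 n ω ^ (j n) ∂P) / EX n (j n))) := by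
  have hsym : ∀ k, ∫ ω, ((I ω k : ℕ) : ℝ) ∂P = 1 / 2 := fun k ↦ by
    rw [integral_natCast_val_fin_two (f := fun ω ↦ I ω k) (by fun_prop), measureReal_def, hmarg k]
    norm_num
  have hint_le : ∀ j ∈ Finset.Nat.antidiagonalTuple d m, ∀ c k,
      Integrable (fun ω ↦ X c k ω ^ j k) P := fun j hj c k ↦
    integrable_pow_of_le (hX c k).aestronglyMeasurable
      (Finset.Nat.le_of_mem_antidiagonalTuple hj k) (hint c k)
  have hEX_pos : ∀ j ∈ Finset.Nat.antidiagonalTuple d m, ∀ k, 0 < EX k (j k) := fun j hj k ↦ by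
    rw [hEX]
    have := integral_pos_of_forall_pos (fun ω ↦ pow_pos (hpos 0 k ω) (j k)) (hint_le j hj 0 k)
    have := integral_pos_of_forall_pos (fun ω ↦ pow_pos (hpos 1 k ω) (j k)) (hint_le j hj 1 k)
    positivity
  simp_rw [fun ω k ↦ Fin.one_sub_cast_mul_add_cast_mul (fun c ↦ X c k ω) (I ω k),
    Finset.sum_pow_eq_sum_piAntidiag, Finset.piAntidiag_univ_fin_eq_antidiagonalTuple]
  rw [integral_finsetSum _ fun j hj ↦ (integrable_prod_comp_select hI hX hIndep
    (ψ := fun k x ↦ x ^ j k) (fun k ↦ by fun_prop) (hint_le j hj)).const_mul _]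
  refine Finset.sum_congr rfl fun j hj ↦ ?_
  rw [integral_const_mul, integral_prod_pow_select hI hX hIndep hsym j (hint_le j hj)
    (fun k ↦ EX k (j k)) (fun k ↦ hEX k (j k)) fun k ↦ (hEX_pos j hj k).ne',
    Nat.cast_multinomial, Finset.Nat.mem_antidiagonalTuple.1 hj, mul_assoc]
  congr 3
  exact Finset.sum_congr rfl fun J hJ ↦ by rw [hθ J (Finset.mem_filter.1 hJ).2]

/-- Corollary 3.3, the `A_2` form: the `m`-th moment of the aggregate
rv of the FGM construction under the natural FGM parametrization
`θ_J = (−2)^{|J|} E[∏_{j∈J}(I_j − 1/2)]`, for `I` with symmetric Bernoulli marginals. -/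
theorem fgm_aggregate_moments_natural {Ω : Type*} [MeasurableSpace Ω]
    (P : Measure Ω) [IsProbabilityMeasure P] (d : ℕ) (F : Fin d → ℝ → ℝ)
    (I : Ω → Fin d → Fin 2) (X : Fin 2 → Fin d → Ω → ℝ)
    (hI : Measurable I) (hX : ∀ j k, Measurable (X j k))
    (hpos : ∀ j k ω, 0 < X j k ω)
    (hIndep : iIndepFun (fgmFamily d I X) P)
    (hmarg : ∀ k : Fin d, P {ω | I ω k = 1} = 1 / 2)
    (hcdf_min : ∀ k x, (P {ω | X 0 k ω ≤ x}).toReal = 1 - (1 - F k x) ^ 2)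
    (hcdf_max : ∀ k x, (P {ω | X 1 k ω ≤ x}).toReal = (F k x) ^ 2)
    (θ : Finset (Fin d) → ℝ)
    (hθ : ∀ J : Finset (Fin d), 2 ≤ J.card →
      θ J = (-2 : ℝ) ^ J.card * ∫ ω, ∏ j ∈ J, (((I ω j : ℕ) : ℝ) - 1 / 2) ∂P)
    (m : ℕ) (hm : 1 ≤ m)
    (hint : ∀ j k, Integrable (fun ω => X j k ω ^ m) P)
    (EX : Fin d → ℕ → ℝ)
    (hEX : ∀ k j, EX k j
      = ((∫ ω, X 0 k ω ^ j ∂P) + ∫ ω, X 1 k ω ^ j ∂P) / 2) :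
    ∫ ω, (∑ k, ((1 - ((I ω k : ℕ) : ℝ)) * X 0 k ω + ((I ω k : ℕ) : ℝ) * X 1 k ω)) ^ m ∂P
      = ∑ j ∈ Finset.Nat.antidiagonalTuple d m,
          ((m.factorial : ℝ) / ∏ k, ((j k).factorial : ℝ))
            * (∏ k, EX k (j k))
            * (1 + ∑ J ∈ Finset.univ.filter (fun J : Finset (Fin d) => 2 ≤ J.card),
                θ J * ∏ n ∈ J, (1 - (∫ ω, X 1 n ω ^ (j n) ∂P) / EX n (j n))) :=
  fgm_aggregate_moments_natural_general P d I X hI hX hpos hIndep hmarg θ hθ m hint EX hEX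
end

section
/- Consider the FGM construction where every marginal cdf is F_k(x) = 1 − e^{−βx}, x ≥ 0, for a common rate β > 0: I : Ω → {0,1}^d a random vector, X^[1]_k with cdf 1−(1−F_k)^2, X^[2]_k with cdf F_k^2, all 2d+1 random elements mutually independent, X_k = (1−I_k)X^[1]_k + I_k X^[2]_k, and S = X_1 + ... + X_d. Let N = I_1 + ... + I_d. Then for every t ≥ 0, E[e^{−tS}] = (2β/(2β+t))^d · E[(β/(β+t))^{N}]. -/
/-!
Given `I = i`, the aggregate is `∑ₖ X^[iₖ]ₖ`, a sum of independent variables that are also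
independent of `I`, so `E[e^{-tS}; I = i] = P(I = i) ∏ₖ E[e^{-t X^[iₖ]ₖ}]`. With `F` the
`Exp(β)` cdf, `X^[1]ₖ` has survival function `e^{-2βx}` and `X^[2]ₖ` has survival function
`2e^{-βx} - e^{-2βx}`; the layer-cake formula `E[e^{-tY}] = 1 - ∫₀^∞ t e^{-ts} P(Y > s) ds` turns
these into the transforms `2β/(2β+t)` and `2β/(2β+t) · β/(β+t)`. Summing over `i` gives
`(2β/(2β+t))^d E[(β/(β+t))^N]`.
-/

open MeasureTheory ProbabilityTheory

open Set Real

theorem integral_mul_exp_neg_mul (t y : ℝ) :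
    ∫ s in (0 : ℝ)..y, t * exp (-(t * s)) = 1 - exp (-(t * y)) := by
  rw [intervalIntegral.integral_eq_sub_of_hasDerivAt (fun s _ => hasDerivAt_neg_exp_mul_exp)
    ((by fun_prop : Continuous fun s => t * exp (-(t * s))).intervalIntegrable _ _)]
  simp only [mul_zero, neg_zero, exp_zero]
  ring

theorem setIntegral_Ioi_exp_neg_mul {c : ℝ} (hc : 0 < c) :
    ∫ x in Ioi 0, exp (-(c * x)) = 1 / c := by
  simpa [neg_div] using integral_exp_mul_Ioi (neg_neg_of_pos hc) 0

theorem exp_neg_mul_le_one {t y : ℝ} (ht : 0 ≤ t) (hy : 0 ≤ y) : exp (-(t * y)) ≤ 1 := by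
  rw [exp_le_one_iff, neg_nonpos]
  exact mul_nonneg ht hy

theorem exp_neg_mul_sq (β x : ℝ) : exp (-β * x) ^ 2 = exp (-(2 * β * x)) := by
  rw [← exp_nat_mul]
  ring_nf

section LaplaceTransform

variable {Ω : Type*} [MeasurableSpace Ω] (P : Measure Ω) {Y : Ω → ℝ} {t : ℝ}

theorem integrable_exp_neg_mul_of_nonneg [IsFiniteMeasure P] (hY : Measurable Y)
    (hY0 : ∀ ω, 0 ≤ Y ω) (ht : 0 ≤ t) : Integrable (fun ω => exp (-(t * Y ω))) P :=
  Integrable.of_bound (by fun_prop) 1 (ae_of_all _ fun ω => by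
    rw [norm_of_nonneg (exp_pos _).le]
    exact exp_neg_mul_le_one ht (hY0 ω))

/-- Layer cake applied to `1 - e^{-tY} = ∫₀^Y t e^{-ts} ds`. -/
theorem integral_exp_neg_mul_eq_one_sub [IsProbabilityMeasure P] (hY : Measurable Y)
    (hY0 : ∀ ω, 0 ≤ Y ω) (ht : 0 ≤ t) :
    ∫ ω, exp (-(t * Y ω)) ∂P
      = 1 - ∫ s in Ioi 0, P.real {ω | s < Y ω} * (t * exp (-(t * s))) := by
  have hsurv : Measurable fun s : ℝ => P.real {ω | s < Y ω} :=
    Antitone.measurable fun s s' hss' => measureReal_mono fun ω (h : s' < Y ω) => hss'.trans_lt h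
  have hlayer := lintegral_comp_eq_lintegral_meas_lt_mul P (g := fun s => t * exp (-(t * s)))
    (ae_of_all _ hY0) hY.aemeasurable
    (fun _ _ => (by fun_prop : Continuous fun s => t * exp (-(t * s))).intervalIntegrable _ _)
    (ae_of_all _ fun s => by positivity)
  rw [eq_sub_iff_add_eq, ← eq_sub_iff_add_eq']
  calc ∫ s in Ioi 0, P.real {ω | s < Y ω} * (t * exp (-(t * s)))
      = (∫⁻ s in Ioi 0, P {ω | s < Y ω} * ENNReal.ofReal (t * exp (-(t * s)))).toReal := by
        rw [integral_eq_lintegral_of_nonneg_ae (ae_of_all _ fun s => by positivity)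
          (by fun_prop)]
        simp only [ENNReal.ofReal_mul measureReal_nonneg, ofReal_measureReal, ne_eq,
          measure_ne_top, not_false_eq_true]
    _ = ∫ ω, 1 - exp (-(t * Y ω)) ∂P := by
        rw [← hlayer, integral_eq_lintegral_of_nonneg_ae
          (ae_of_all _ fun ω => sub_nonneg.2 (exp_neg_mul_le_one ht (hY0 ω))) (by fun_prop)]
        simp only [integral_mul_exp_neg_mul]
    _ = 1 - ∫ ω, exp (-(t * Y ω)) ∂P := by
        rw [integral_sub (integrable_const 1) (integrable_exp_neg_mul_of_nonneg P hY hY0 ht),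
          integral_const, probReal_univ, one_smul]

theorem integral_exp_neg_mul_of_cdf_eq_one_sub_sum [IsProbabilityMeasure P] {ι : Type*}
    (hY : Measurable Y) (hY0 : ∀ ω, 0 ≤ Y ω) (s : Finset ι) (a b : ι → ℝ)
    (hb : ∀ i ∈ s, 0 < b i)
    (hcdf : ∀ x, 0 < x → P.real {ω | Y ω ≤ x} = 1 - ∑ i ∈ s, a i * exp (-(b i * x)))
    (ht : 0 ≤ t) :
    ∫ ω, exp (-(t * Y ω)) ∂P = 1 - ∑ i ∈ s, a i * t / (b i + t) := by
  have hsurv (x : ℝ) (hx : 0 < x) :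
      P.real {ω | x < Y ω} = ∑ i ∈ s, a i * exp (-(b i * x)) := by
    have hcompl : {ω | x < Y ω} = {ω | Y ω ≤ x}ᶜ := by ext; simp
    rw [hcompl, probReal_compl_eq_one_sub (measurableSet_le hY measurable_const), hcdf x hx,
      sub_sub_cancel]
  have hbt (i : ι) (hi : i ∈ s) : 0 < b i + t := by linarith [hb i hi]
  have hterm (i : ι) (x : ℝ) :
      a i * exp (-(b i * x)) * (t * exp (-(t * x))) = a i * t * exp (-((b i + t) * x)) := by
    rw [mul_mul_mul_comm, ← exp_add]
    ring_nf
  rw [integral_exp_neg_mul_eq_one_sub P hY hY0 ht,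
    setIntegral_congr_fun measurableSet_Ioi fun x hx => by rw [hsurv x hx, Finset.sum_mul]]
  simp_rw [hterm]
  rw [integral_finsetSum _ fun i hi => by
    simpa only [neg_mul] using (exp_neg_integrableOn_Ioi 0 (hbt i hi)).const_mul (a i * t)]
  congr 1
  refine Finset.sum_congr rfl fun i hi => ?_
  rw [integral_const_mul, setIntegral_Ioi_exp_neg_mul (hbt i hi), mul_one_div]

theorem integral_exp_neg_mul_of_cdf_minExp [IsProbabilityMeasure P] (hY : Measurable Y)
    (hY0 : ∀ ω, 0 ≤ Y ω) {β : ℝ} (hβ : 0 < β)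
    (hcdf : ∀ x, 0 < x → P.real {ω | Y ω ≤ x} = 1 - (1 - (1 - exp (-β * x))) ^ 2)
    (ht : 0 ≤ t) :
    ∫ ω, exp (-(t * Y ω)) ∂P = 2 * β / (2 * β + t) := by
  rw [integral_exp_neg_mul_of_cdf_eq_one_sub_sum P hY hY0 Finset.univ ![1] ![2 * β]
    (by simp [hβ]) (fun x hx => by rw [hcdf x hx, sub_sub_cancel, exp_neg_mul_sq]; simp) ht]
  simp only [Fin.sum_univ_one, Matrix.cons_val_zero]
  field_simp
  ring

theorem integral_exp_neg_mul_of_cdf_maxExp [IsProbabilityMeasure P] (hY : Measurable Y)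
    (hY0 : ∀ ω, 0 ≤ Y ω) {β : ℝ} (hβ : 0 < β)
    (hcdf : ∀ x, 0 < x → P.real {ω | Y ω ≤ x} = (1 - exp (-β * x)) ^ 2)
    (ht : 0 ≤ t) :
    ∫ ω, exp (-(t * Y ω)) ∂P = 2 * β / (2 * β + t) * (β / (β + t)) := by
  rw [integral_exp_neg_mul_of_cdf_eq_one_sub_sum P hY hY0 Finset.univ ![2, -1] ![β, 2 * β]
    (by simp [Fin.forall_fin_two, hβ])
    (fun x hx => by
      rw [hcdf x hx, sub_sq, exp_neg_mul_sq, Fin.sum_univ_two]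
      simp only [Matrix.cons_val_zero, Matrix.cons_val_one, Matrix.cons_val_fin_one, neg_mul]
      ring) ht]
  simp only [Fin.sum_univ_two, Matrix.cons_val_zero, Matrix.cons_val_one]
  field_simp
  ring

end LaplaceTransform

theorem integral_eq_sum_setIntegral_fiber {Ω α E : Type*} [MeasurableSpace Ω] {P : Measure Ω}
    [Fintype α] [MeasurableSpace α] [MeasurableSingletonClass α]
    [NormedAddCommGroup E] [NormedSpace ℝ E] {I : Ω → α} (hI : Measurable I)
    {F : α → Ω → E} (hF : ∀ a, Integrable (F a) P) :
    ∫ ω, F (I ω) ω ∂P = ∑ a, ∫ ω in {ω | I ω = a}, F a ω ∂P := by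
  classical
  have hfiber_meas (a : α) : MeasurableSet {ω | I ω = a} := hI (measurableSet_singleton a)
  have hfiber (ω : Ω) : F (I ω) ω = ∑ a, {ω | I ω = a}.indicator (F a) ω := by
    simp [Set.indicator_apply]
  simp_rw [hfiber]
  rw [integral_finsetSum _ fun a _ => (hF a).indicator (hfiber_meas a)]
  exact Finset.sum_congr rfl fun a _ => integral_indicator (hfiber_meas a)

section FGM

variable {d : ℕ}

/-- Test functions for the whole family `fgmFamily`: their product is `1{I = i}` times
`∏ₖ g (i k) k (X (i k) k)`, the components `X j k` with `j ≠ i k` being tested against `1`. -/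
noncomputable def fgmTestFun (i : Fin d → Fin 2) (g : Fin 2 → Fin d → ℝ → ℝ) :
    (o : Option (Fin d × Fin 2)) → fgmType d o → ℝ
  | none => fun v : Fin d → Fin 2 => if v = i then 1 else 0
  | some (k, j) => fun x => if j = i k then g j k x else 1

theorem measurable_fgmTestFun (i : Fin d → Fin 2) {g : Fin 2 → Fin d → ℝ → ℝ}
    (hg : ∀ j k, Measurable (g j k)) (o : Option (Fin d × Fin 2)) :
    Measurable (fgmTestFun i g o) := by
  rcases o with _ | ⟨k, j⟩
  · exact measurable_of_finite (α := Fin d → Fin 2) (fgmTestFun i g none)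
  · exact Measurable.ite (.const _) (hg j k) measurable_const

theorem measurable_fgmFamily {Ω : Type*} [MeasurableSpace Ω] {I : Ω → Fin d → Fin 2}
    {X : Fin 2 → Fin d → Ω → ℝ} (hI : Measurable I) (hX : ∀ j k, Measurable (X j k))
    (o : Option (Fin d × Fin 2)) : Measurable (fgmFamily d I X o) := by
  rcases o with _ | ⟨k, j⟩
  exacts [hI, hX j k]

theorem setIntegral_fgm_prod_eq_mul_prod_integral {Ω : Type*} [MeasurableSpace Ω]
    {P : Measure Ω} {I : Ω → Fin d → Fin 2} {X : Fin 2 → Fin d → Ω → ℝ} (hI : Measurable I)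
    (hX : ∀ j k, Measurable (X j k)) (hIndep : iIndepFun (fgmFamily d I X) P)
    {g : Fin 2 → Fin d → ℝ → ℝ} (hg : ∀ j k, Measurable (g j k)) (i : Fin d → Fin 2) :
    ∫ ω in {ω | I ω = i}, ∏ k, g (i k) k (X (i k) k ω) ∂P
      = P.real {ω | I ω = i} * ∏ k, ∫ ω, g (i k) k (X (i k) k ω) ∂P := by
  have := hIndep.isProbabilityMeasure
  have key := hIndep.integral_fun_prod_comp (f := fgmTestFun i g)
    (fun o => (measurable_fgmFamily hI hX o).aemeasurable)
    (fun o => (measurable_fgmTestFun i hg o).aestronglyMeasurable)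
  have hint_ite (k : Fin d) (j : Fin 2) : ∫ ω, (if j = i k then g j k (X j k ω) else 1) ∂P
      = if j = i k then ∫ ω, g j k (X j k ω) ∂P else 1 := by
    split_ifs <;> simp
  simp only [Fintype.prod_option, Fintype.prod_prod_type, fgmTestFun, fgmFamily, hint_ite,
    Fintype.prod_ite_eq', boole_mul] at key
  have hfiber : MeasurableSet {ω | I ω = i} := hI (measurableSet_singleton i)
  rw [← integral_indicator hfiber, ← integral_indicator_one hfiber]
  simpa [Set.indicator_apply] using key

end FGM

/-- formula (4.4): the Laplace–Stieltjes transform of the aggregate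
rv of the FGM construction with identical exponential marginals
`F_k(x) = 1 − e^{−βx}`, in terms of the pgf of `N = I_1 + ⋯ + I_d`. -/
theorem fgm_aggregate_lst_exponential {Ω : Type*} [MeasurableSpace Ω]
    (P : Measure Ω) [IsProbabilityMeasure P] (d : ℕ) (β : ℝ) (hβ : 0 < β)
    (I : Ω → Fin d → Fin 2) (X : Fin 2 → Fin d → Ω → ℝ)
    (hI : Measurable I) (hX : ∀ j k, Measurable (X j k))
    (hnonneg : ∀ j k ω, 0 ≤ X j k ω)
    (hIndep : iIndepFun (fgmFamily d I X) P)
    (hcdf_min : ∀ (k : Fin d) (x : ℝ), 0 ≤ x →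
      (P {ω | X 0 k ω ≤ x}).toReal = 1 - (1 - (1 - Real.exp (-β * x))) ^ 2)
    (hcdf_max : ∀ (k : Fin d) (x : ℝ), 0 ≤ x →
      (P {ω | X 1 k ω ≤ x}).toReal = (1 - Real.exp (-β * x)) ^ 2) :
    ∀ t : ℝ, 0 ≤ t →
      ∫ ω, Real.exp (-t * ∑ k,
          ((1 - ((I ω k : ℕ) : ℝ)) * X 0 k ω + ((I ω k : ℕ) : ℝ) * X 1 k ω)) ∂P
        = (2 * β / (2 * β + t)) ^ d
            * ∫ ω, (β / (β + t)) ^ (∑ k, (I ω k : ℕ)) ∂P := by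
  intro t ht
  have hmarginal (j : Fin 2) (k : Fin d) :
      ∫ ω, exp (-(t * X j k ω)) ∂P = 2 * β / (2 * β + t) * (β / (β + t)) ^ (j : ℕ) := by
    fin_cases j
    · simpa using integral_exp_neg_mul_of_cdf_minExp P (hX 0 k) (hnonneg 0 k) hβ
        (fun x hx => hcdf_min k x hx.le) ht
    · simpa using integral_exp_neg_mul_of_cdf_maxExp P (hX 1 k) (hnonneg 1 k) hβ
        (fun x hx => hcdf_max k x hx.le) ht
  have hselect (ω : Ω) (k : Fin d) :
      (1 - ((I ω k : ℕ) : ℝ)) * X 0 k ω + ((I ω k : ℕ) : ℝ) * X 1 k ω = X (I ω k) k ω := by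
    generalize I ω k = j
    fin_cases j <;> simp
  have hint (i : Fin d → Fin 2) : Integrable (fun ω => exp (-(t * ∑ k, X (i k) k ω))) P :=
    integrable_exp_neg_mul_of_nonneg P (by fun_prop)
      (fun ω => Finset.sum_nonneg fun k _ => hnonneg (i k) k ω) ht
  calc _ = ∫ ω, exp (-(t * ∑ k, X (I ω k) k ω)) ∂P := by simp_rw [hselect, neg_mul]
    _ = ∑ i, ∫ ω in {ω | I ω = i}, exp (-(t * ∑ k, X (i k) k ω)) ∂P :=
        integral_eq_sum_setIntegral_fiber hI hint
    _ = ∑ i, P.real {ω | I ω = i} * ∏ k, ∫ ω, exp (-(t * X (i k) k ω)) ∂P := by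
        simp_rw [Finset.mul_sum, ← Finset.sum_neg_distrib, exp_sum]
        exact Finset.sum_congr rfl fun i _ => setIntegral_fgm_prod_eq_mul_prod_integral hI hX
          hIndep (g := fun _ _ x => exp (-(t * x))) (fun _ _ => by fun_prop) i
    _ = _ := by
        rw [integral_eq_sum_setIntegral_fiber hI (F := fun i _ => (β / (β + t)) ^ ∑ k, (i k : ℕ))
          fun _ => integrable_const _, Finset.mul_sum]
        refine Finset.sum_congr rfl fun i _ => ?_
        simp_rw [hmarginal, Finset.prod_mul_distrib, Finset.prod_const,
          Finset.prod_pow_eq_pow_sum, setIntegral_const, smul_eq_mul, Finset.card_univ,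
          Fintype.card_fin]
        ring
end
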